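/- arXiv:1501.07458 — 2 statements merged into one kernel-verified Lean document; each statement's English description precedes it below -/
import Mathlib

section
/- Let F be a distribution on ℝ and τ a counting random variable with P(τ = k) = pₖ, ∑_{k=0}^n pₖ = 1 and pₙ > 0 for some n ≥ 1. Then the compound distribution F^{*τ} = ∑_{k=0}^n pₖ F^{*k} is long-tailed if and only if F^{*n} is long-tailed. -/
open MeasureTheory Filter Set Asymptotics

/-- Tail function of a distribution: `F̄(x) = μ(x, ∞)`. -/
noncomputable def tail (μ : Measure ℝ) (x : ℝ) : ℝ := (μ (Set.Ioi x)).toReal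

/-- `F(a, b] = F(b) - F(a)`. -/
noncomputable def intv (μ : Measure ℝ) (a b : ℝ) : ℝ := (μ (Set.Ioc a b)).toReal

/-- A distribution is long-tailed if `F̄(x+1)/F̄(x) → 1` as `x → ∞`. -/
def LongTailed (μ : Measure ℝ) : Prop :=
  Tendsto (fun x => tail μ (x + 1) / tail μ x) atTop (nhds 1)

/-- Convolution of two distributions on ℝ (law of the sum of independent rvs). -/
noncomputable def mconv (μ ν : Measure ℝ) : Measure ℝ :=
  Measure.map (fun p : ℝ × ℝ => p.1 + p.2) (μ.prod ν)

/-- `n`-fold convolution of a distribution with itself; `nconv μ 0` is the unit mass at 0. -/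
noncomputable def nconv (μ : Measure ℝ) : ℕ → Measure ℝ
  | 0 => Measure.dirac 0
  | n + 1 => mconv (nconv μ n) μ


/-!
Say that `μ` is shift-dominated by `ν` if `μ s ≤ C * ν (thickening a s)` for all sets `s`.
Long-tailedness passes between mutually shift-dominated finite measures on `ℝ`: the mass
`μ (x, x + 1]` is at most a multiple of `ν (x - a, x + 1 + a] = ν̄ (x - a) - ν̄ (x + 1 + a)`, the
tail `μ̄ x` is at least a multiple of `ν̄ (x + a')`, and for long-tailed `ν` every ratio
`ν̄ (x + b) / ν̄ (x + c)` tends to `1`, so `μ (x, x + 1] / μ̄ x → 0`.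

The compound distribution dominates `pₙ F^{*n}`, and conversely each `F^{*k}` with `k ≤ n` is
shift-dominated by `F^{*n} = F^{*k} ∗ F^{*(n-k)}`, since `(μ ∗ ν) (s + B(0, a)) ≥ ν (B(0, a)) μ s`
and a probability measure `ν` charges some ball `B(0, a)`.
-/

open Metric Topology
open scoped NNReal ENNReal Pointwise

section ShiftDominated

variable {X : Type*} [PseudoMetricSpace X] [MeasurableSpace X] {μ μ₁ μ₂ ν : Measure X}

def ShiftDominated (μ ν : Measure X) : Prop :=
  ∃ C a : ℝ≥0, ∀ s, μ s ≤ C * ν (thickening a s)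

theorem ShiftDominated.zero_left (ν : Measure X) : ShiftDominated 0 ν :=
  ⟨0, 0, fun s => by simp⟩

theorem ShiftDominated.add_left (h₁ : ShiftDominated μ₁ ν) (h₂ : ShiftDominated μ₂ ν) :
    ShiftDominated (μ₁ + μ₂) ν := by
  obtain ⟨C₁, a₁, h₁⟩ := h₁
  obtain ⟨C₂, a₂, h₂⟩ := h₂
  refine ⟨C₁ + C₂, max a₁ a₂, fun s => ?_⟩
  calc (μ₁ + μ₂) s = μ₁ s + μ₂ s := Measure.add_apply _ _ _
    _ ≤ C₁ * ν (thickening a₁ s) + C₂ * ν (thickening a₂ s) := add_le_add (h₁ s) (h₂ s)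
    _ ≤ C₁ * ν (thickening (max a₁ a₂) s) + C₂ * ν (thickening (max a₁ a₂) s) := by
      gcongr
      exacts [le_max_left _ _, le_max_right _ _]
    _ = ↑(C₁ + C₂) * ν (thickening (max a₁ a₂) s) := by push_cast; ring

theorem ShiftDominated.smul_left (r : ℝ≥0) (h : ShiftDominated μ ν) :
    ShiftDominated ((r : ℝ≥0∞) • μ) ν := by
  obtain ⟨C, a, h⟩ := h
  refine ⟨r * C, a, fun s => ?_⟩
  rw [Measure.smul_apply, smul_eq_mul, ENNReal.coe_mul, mul_assoc]
  gcongr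
  exact h s

theorem ShiftDominated.finset_sum_left {ι : Type*} (I : Finset ι) {μ : ι → Measure X}
    (h : ∀ i ∈ I, ShiftDominated (μ i) ν) : ShiftDominated (∑ i ∈ I, μ i) ν :=
  Finset.sum_induction μ (ShiftDominated · ν) (fun _ _ => .add_left) (.zero_left ν) h

theorem ShiftDominated.of_smul_le {r : ℝ≥0} (hr : r ≠ 0) (h : (r : ℝ≥0∞) • μ ≤ ν) :
    ShiftDominated μ ν := by
  refine ⟨r⁻¹, 1, fun s => ?_⟩
  rw [ENNReal.coe_inv hr, ← ENNReal.div_eq_inv_mul,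
    ENNReal.le_div_iff_mul_le (.inl (by simpa using hr)) (.inl ENNReal.coe_ne_top), mul_comm]
  calc (r : ℝ≥0∞) * μ s = ((r : ℝ≥0∞) • μ) s := rfl
    _ ≤ ν s := h s
    _ ≤ ν (thickening 1 s) := measure_mono (self_subset_thickening one_pos s)

end ShiftDominated

theorem MeasureTheory.Measure.mul_le_conv_add {G : Type*} [AddMonoid G] [MeasurableSpace G]
    [MeasurableAdd₂ G] (μ ν : Measure G) [SFinite ν] (s t : Set G) :
    μ s * ν t ≤ (μ ∗ ν) (s + t) :=
  calc μ s * ν t = μ.prod ν (s ×ˢ t) := (Measure.prod_prod s t).symm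
    _ ≤ μ.prod ν ((fun p : G × G => p.1 + p.2) ⁻¹' (s + t)) :=
      measure_mono fun p hp => Set.add_mem_add hp.1 hp.2
    _ ≤ (μ ∗ ν) (s + t) := Measure.le_map_apply (by fun_prop) _

theorem MeasureTheory.Measure.exists_measure_ball_natCast_ne_zero {X : Type*}
    [PseudoMetricSpace X] [MeasurableSpace X] {ν : Measure X} (hν : ν ≠ 0) (x : X) :
    ∃ n : ℕ, ν (ball x n) ≠ 0 := by
  by_contra! h
  refine hν (Measure.measure_univ_eq_zero.mp ?_)
  rw [← iUnion_ball_nat x]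
  exact measure_iUnion_null fun n => h n

theorem ShiftDominated.self_conv {G : Type*} [SeminormedAddCommGroup G] [MeasurableSpace G]
    [MeasurableAdd₂ G] (μ ν : Measure G) [IsFiniteMeasure ν] (hν : ν ≠ 0) :
    ShiftDominated μ (μ ∗ ν) := by
  obtain ⟨n, hn⟩ := ν.exists_measure_ball_natCast_ne_zero hν 0
  refine ⟨(ν (ball 0 n))⁻¹.toNNReal, n, fun s => ?_⟩
  rw [ENNReal.coe_toNNReal (ENNReal.inv_ne_top.mpr hn), ← ENNReal.div_eq_inv_mul,
    ENNReal.le_div_iff_mul_le (.inl hn) (.inl (measure_ne_top _ _)), ← add_ball_zero]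
  exact μ.mul_le_conv_add ν s _

section AntitoneRatio

variable {t : ℝ → ℝ}

theorem tendsto_add_natCast_div_of_tendsto_add_one_div (hpos : ∀ x, 0 < t x)
    (h : Tendsto (fun x => t (x + 1) / t x) atTop (𝓝 1)) (m : ℕ) :
    Tendsto (fun x => t (x + m) / t x) atTop (𝓝 1) := by
  induction m with
  | zero => simpa using tendsto_const_nhds.congr fun x => (div_self (hpos x).ne').symm
  | succ m ih =>
    have hshift := ih.comp (tendsto_atTop_add_const_right atTop 1 tendsto_id)
    refine (one_mul (1 : ℝ) ▸ hshift.mul h).congr fun x => ?_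
    simp only [Function.comp_apply, id, Nat.cast_succ]
    rw [div_mul_div_cancel₀ (hpos _).ne', add_comm (m : ℝ), add_assoc]

theorem Antitone.tendsto_add_div_of_tendsto_add_one_div (ht : Antitone t)
    (hpos : ∀ x, 0 < t x) (h : Tendsto (fun x => t (x + 1) / t x) atTop (𝓝 1)) (c : ℝ) :
    Tendsto (fun x => t (x + c) / t x) atTop (𝓝 1) := by
  set m : ℕ := ⌈|c|⌉₊
  have hm : |c| ≤ m := Nat.le_ceil _
  have hup := tendsto_add_natCast_div_of_tendsto_add_one_div hpos h m
  have hdown : Tendsto (fun x => t (x - m) / t x) atTop (𝓝 1) := by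
    have := (hup.comp (tendsto_atTop_add_const_right atTop (-(m : ℝ)) tendsto_id)).inv₀ one_ne_zero
    refine (inv_one (G := ℝ) ▸ this).congr fun x => ?_
    simp [sub_eq_add_neg]
  refine tendsto_of_tendsto_of_tendsto_of_le_of_le hup hdown (fun x => ?_) (fun x => ?_) <;>
    refine div_le_div_of_nonneg_right (ht ?_) (hpos x).le <;>
    linarith [abs_le.mp hm]

theorem Antitone.tendsto_add_div_add_of_tendsto_add_one_div (ht : Antitone t)
    (hpos : ∀ x, 0 < t x) (h : Tendsto (fun x => t (x + 1) / t x) atTop (𝓝 1)) (b c : ℝ) :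
    Tendsto (fun x => t (x + b) / t (x + c)) atTop (𝓝 1) := by
  have := (ht.tendsto_add_div_of_tendsto_add_one_div hpos h b).div
    (ht.tendsto_add_div_of_tendsto_add_one_div hpos h c) one_ne_zero
  exact (div_one (1 : ℝ) ▸ this).congr fun x => div_div_div_cancel_right₀ (hpos x).ne' _ _

end AntitoneRatio

section Tails

variable {μ ν : Measure ℝ}

theorem tail_antitone [IsFiniteMeasure μ] : Antitone (tail μ) := fun _ _ hab =>
  ENNReal.toReal_mono (measure_ne_top μ _) (measure_mono (Ioi_subset_Ioi hab))

theorem intv_add_tail [IsFiniteMeasure μ] {a b : ℝ} (h : a ≤ b) :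
    intv μ a b + tail μ b = tail μ a := by
  rw [intv, tail, tail, ← ENNReal.toReal_add (measure_ne_top μ _) (measure_ne_top μ _),
    ← measure_union Ioc_disjoint_Ioi_same measurableSet_Ioi, Ioc_union_Ioi_eq_Ioi h]

theorem thickening_Ioi_subset (a x : ℝ) : thickening a (Ioi x) ⊆ Ioi (x - a) := by
  intro y hy
  obtain ⟨z, hz, hyz⟩ := mem_thickening_iff.mp hy
  have := (abs_lt.mp (Real.dist_eq y z ▸ hyz)).1
  exact show x - a < y by linarith [mem_Ioi.mp hz]

theorem thickening_Ioc_subset (a x b : ℝ) : thickening a (Ioc x b) ⊆ Ioc (x - a) (b + a) := by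
  intro y hy
  obtain ⟨z, hz, hyz⟩ := mem_thickening_iff.mp hy
  have := abs_lt.mp (Real.dist_eq y z ▸ hyz)
  exact ⟨by linarith [hz.1], by linarith [hz.2]⟩

theorem toReal_measure_le_of_thickening_subset [IsFiniteMeasure ν] {C : ℝ≥0} {a : ℝ}
    (h : ∀ s, μ s ≤ C * ν (thickening a s)) {s t : Set ℝ} (hst : thickening a s ⊆ t) :
    (μ s).toReal ≤ C * (ν t).toReal := by
  rw [← ENNReal.coe_toReal, ← ENNReal.toReal_mul]
  exact ENNReal.toReal_mono (ENNReal.mul_ne_top ENNReal.coe_ne_top (measure_ne_top ν t))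
    ((h s).trans (by gcongr))

theorem LongTailed.tail_pos [IsFiniteMeasure μ] (h : LongTailed μ) (x : ℝ) : 0 < tail μ x := by
  obtain ⟨y, hy, hyx⟩ := ((h.eventually (eventually_ne_nhds one_ne_zero)).and
    (eventually_ge_atTop x)).exists
  have hty : tail μ y ≠ 0 := fun h0 => hy (by simp [h0])
  exact ((ENNReal.toReal_nonneg).lt_of_ne' hty).trans_le (tail_antitone hyx)

theorem LongTailed.tendsto_tail_add_div_tail_add [IsFiniteMeasure μ] (h : LongTailed μ)
    (b c : ℝ) : Tendsto (fun x => tail μ (x + b) / tail μ (x + c)) atTop (𝓝 1) :=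
  tail_antitone.tendsto_add_div_add_of_tendsto_add_one_div h.tail_pos h b c

theorem LongTailed.of_tendsto_intv_div_tail [IsFiniteMeasure μ] (hpos : ∀ x, 0 < tail μ x)
    (h : Tendsto (fun x => intv μ x (x + 1) / tail μ x) atTop (𝓝 0)) : LongTailed μ := by
  refine (sub_zero (1 : ℝ) ▸ tendsto_const_nhds.sub h).congr fun x => ?_
  have hx := hpos x
  rw [← intv_add_tail (show x ≤ x + 1 by linarith)] at hx ⊢
  rw [eq_div_iff hx.ne', sub_mul, div_mul_cancel₀ _ hx.ne']
  ring

theorem LongTailed.of_shiftDominated [IsFiniteMeasure μ] [IsFiniteMeasure ν] (hν : LongTailed ν)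
    (hμν : ShiftDominated μ ν) (hνμ : ShiftDominated ν μ) : LongTailed μ := by
  obtain ⟨C₁, a₁, h₁⟩ := hμν
  obtain ⟨C₂, a₂, h₂⟩ := hνμ
  have hlow (x : ℝ) : tail ν (x + a₂) ≤ C₂ * tail μ x := by
    simpa [tail] using toReal_measure_le_of_thickening_subset h₂ (thickening_Ioi_subset a₂ (x + a₂))
  have hμpos (x : ℝ) : 0 < tail μ x :=
    pos_of_mul_pos_right ((hν.tail_pos _).trans_le (hlow x)) C₂.coe_nonneg
  set D : ℝ → ℝ := fun x => tail ν (x + -a₁) - tail ν (x + (1 + a₁))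
  have hinc (x : ℝ) : intv μ x (x + 1) ≤ C₁ * D x := by
    have := toReal_measure_le_of_thickening_subset h₁ (thickening_Ioc_subset a₁ x (x + 1))
    have hsplit := intv_add_tail (μ := ν) (show x - a₁ ≤ x + 1 + a₁ by linarith [a₁.coe_nonneg])
    rwa [show D x = tail ν (x - a₁) - tail ν (x + 1 + a₁) by simp only [D]; ring_nf,
      ← eq_sub_of_add_eq hsplit]
  have hbound (x : ℝ) : intv μ x (x + 1) / tail μ x ≤ C₁ * C₂ * (D x / tail ν (x + a₂)) := by
    have hD : 0 ≤ D x := sub_nonneg.mpr (tail_antitone (by linarith [a₁.coe_nonneg]))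
    have hpos := hν.tail_pos (x + a₂)
    rw [div_le_iff₀ (hμpos x)]
    calc intv μ x (x + 1) ≤ C₁ * (D x / tail ν (x + a₂)) * tail ν (x + a₂) := by
          rw [mul_assoc, div_mul_cancel₀ _ hpos.ne']
          exact hinc x
      _ ≤ C₁ * (D x / tail ν (x + a₂)) * (C₂ * tail μ x) := by gcongr; exact hlow x
      _ = _ := by ring
  have hlim : Tendsto (fun x => C₁ * C₂ * (D x / tail ν (x + a₂))) atTop (𝓝 0) := by
    simpa [D, sub_div] using ((hν.tendsto_tail_add_div_tail_add _ _).sub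
      (hν.tendsto_tail_add_div_tail_add _ _)).const_mul ((C₁ : ℝ) * C₂)
  exact .of_tendsto_intv_div_tail hμpos <|
    squeeze_zero (fun x => div_nonneg ENNReal.toReal_nonneg (hμpos x).le) hbound hlim

theorem LongTailed.iff_of_shiftDominated [IsFiniteMeasure μ] [IsFiniteMeasure ν]
    (hμν : ShiftDominated μ ν) (hνμ : ShiftDominated ν μ) : LongTailed μ ↔ LongTailed ν :=
  ⟨fun hμ => hμ.of_shiftDominated hνμ hμν, fun hν => hν.of_shiftDominated hμν hνμ⟩

end Tails

section Convolution

variable (F : Measure ℝ) [IsProbabilityMeasure F]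

instance nconv.instIsProbabilityMeasure (k : ℕ) : IsProbabilityMeasure (nconv F k) := by
  induction k with
  | zero => exact Measure.dirac.isProbabilityMeasure
  | succ k ih => exact Measure.probabilitymeasure_of_probabilitymeasures_conv (nconv F k) F

theorem nconv_add (k m : ℕ) : nconv F (k + m) = nconv F k ∗ nconv F m := by
  induction m with
  | zero => exact (Measure.conv_dirac_zero _).symm
  | succ m ih => exact (congrArg (· ∗ F) ih).trans (Measure.conv_assoc _ _ _)

theorem shiftDominated_nconv_of_le {k n : ℕ} (hkn : k ≤ n) :
    ShiftDominated (nconv F k) (nconv F n) := by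
  obtain ⟨m, rfl⟩ := Nat.exists_eq_add_of_le hkn
  rw [nconv_add]
  exact ShiftDominated.self_conv _ _ (IsProbabilityMeasure.ne_zero _)

end Convolution

theorem stmt11_general (F : Measure ℝ) [IsProbabilityMeasure F]
    (n : ℕ) (p : ℕ → ℝ) (hpn : 0 < p n) :
    LongTailed (∑ k ∈ Finset.range (n + 1), ENNReal.ofReal (p k) • nconv F k) ↔
      LongTailed (nconv F n) := by
  have (k : ℕ) : IsFiniteMeasure (ENNReal.ofReal (p k) • nconv F k) :=
    ⟨ENNReal.mul_lt_top ENNReal.ofReal_lt_top (measure_lt_top _ _)⟩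
  have hterm_le : ENNReal.ofReal (p n) • nconv F n ≤
      ∑ k ∈ Finset.range (n + 1), ENNReal.ofReal (p k) • nconv F k :=
    Finset.single_le_sum (f := fun k => ENNReal.ofReal (p k) • nconv F k)
      (fun _ _ => Measure.zero_le _) (Finset.self_mem_range_succ n)
  refine LongTailed.iff_of_shiftDominated ?_ ?_
  · exact ShiftDominated.finset_sum_left _ fun k hk =>
      (shiftDominated_nconv_of_le F (Finset.mem_range_succ_iff.mp hk)).smul_left _
  · exact ShiftDominated.of_smul_le (Real.toNNReal_pos.mpr hpn).ne' hterm_le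

/-- For i.i.d. summands and a counting variable with bounded support, the compound
distribution sum_k p_k F^{*k} is long-tailed iff F^{*n} is long-tailed. -/
theorem stmt11 (F : Measure ℝ) [IsProbabilityMeasure F] (x₀ : ℝ) (hx₀ : 0 < tail F x₀)
    (n : ℕ) (hn : 1 ≤ n) (p : ℕ → ℝ) (hp0 : ∀ k, 0 ≤ p k)
    (hsum : ∑ k ∈ Finset.range (n + 1), p k = 1) (hpn : 0 < p n) :
    LongTailed (∑ k ∈ Finset.range (n + 1), ENNReal.ofReal (p k) • nconv F k) ↔
      LongTailed (nconv F n) :=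
  stmt11_general F n p hpn
end

section
/- For any heavy-tailed distribution F on the positive half-line with \bar{F}(x) > 0 for all x, liminf_{x→∞} \overline{F^{*2}}(x)/\bar{F}(x) ≥ 2. -/
/-!
For `X ≥ 0` with law `F` and `β, T ≥ 0`, the layer-cake formula gives
`E exp (β min(X, T)) = 1 + φ_F(T)` with `φ_F(T) = ∫₀ᵀ β e^{βt} F̄(t) dt`, and
`min(X + Y, T) ≤ min(X, T) + min(Y, T)` together with independence gives
`1 + φ_{F*F}(T) ≤ (1 + φ_F(T))²`.

Suppose `F̄*²(x) > 16 F̄(x)` for all `x ≥ M ≥ 1` and take `β = 1/M`, so that `φ_F(M) ≤ e - 1 ≤ 2`.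
Heavy-tailedness means `φ_F(T) → ∞`, so by continuity `φ_F(T) = 3` for some `T ≥ M`.
Integrating the assumed bound over `[M, T]` gives `φ_{F*F}(T) ≥ 16 (φ_F(T) - φ_F(M)) ≥ 16`,
contradicting `1 + φ_{F*F}(T) ≤ 16`. So the ratio `F̄*²/F̄` is frequently at most `16`; this is
what makes the real `liminf` meaningful (it is `0` for a ratio tending to `∞`). Finally
`P(X + Y ≤ x) ≤ P(X ≤ x) P(Y ≤ x)` gives `F̄*²(x) ≥ 2 F̄(x) - F̄(x)²`, and `F̄(x) → 0`.
-/

open MeasureTheory Filter Set Asymptotics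

open Real Topology

instance isProbabilityMeasure_mconv (μ ν : Measure ℝ) [IsProbabilityMeasure μ]
    [IsProbabilityMeasure ν] : IsProbabilityMeasure (mconv μ ν) :=
  Measure.isProbabilityMeasure_map (by fun_prop)

lemma mconv_apply (μ ν : Measure ℝ) {s : Set ℝ} (hs : MeasurableSet s) :
    mconv μ ν s = μ.prod ν ((fun p : ℝ × ℝ => p.1 + p.2) ⁻¹' s) :=
  Measure.map_apply (by fun_prop) hs

lemma ae_nonneg_of_measure_Iio_eq_zero {μ : Measure ℝ} (hμ : μ (Iio 0) = 0) :
    ∀ᵐ y ∂μ, 0 ≤ y := by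
  filter_upwards [measure_eq_zero_iff_ae_notMem.mp hμ] with y hy using not_lt.mp hy

lemma ae_prod_nonneg {μ ν : Measure ℝ} [SFinite μ] [SFinite ν] (hμ : μ (Iio 0) = 0)
    (hν : ν (Iio 0) = 0) : ∀ᵐ p ∂μ.prod ν, 0 ≤ p.1 ∧ 0 ≤ p.2 :=
  (Measure.quasiMeasurePreserving_fst.ae (ae_nonneg_of_measure_Iio_eq_zero hμ)).and
    (Measure.quasiMeasurePreserving_snd.ae (ae_nonneg_of_measure_Iio_eq_zero hν))

lemma mconv_Iic_le {μ ν : Measure ℝ} [SFinite μ] [SFinite ν] (hμ : μ (Iio 0) = 0)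
    (hν : ν (Iio 0) = 0) (x : ℝ) : mconv μ ν (Iic x) ≤ μ (Iic x) * ν (Iic x) := by
  rw [mconv_apply _ _ measurableSet_Iic, ← Measure.prod_prod]
  refine measure_mono_ae ?_
  filter_upwards [ae_prod_nonneg hμ hν] with p hp (hsum : p.1 + p.2 ≤ x)
  exact ⟨show p.1 ≤ x by linarith, show p.2 ≤ x by linarith⟩

lemma mconv_Iio_eq_zero {μ ν : Measure ℝ} [SFinite μ] [SFinite ν] (hμ : μ (Iio 0) = 0)
    (hν : ν (Iio 0) = 0) : mconv μ ν (Iio 0) = 0 := by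
  rw [mconv_apply _ _ measurableSet_Iio, measure_eq_zero_iff_ae_notMem]
  filter_upwards [ae_prod_nonneg hμ hν] with p hp (hsum : p.1 + p.2 < 0)
  linarith [hp.1, hp.2]

lemma tail_eq_one_sub (μ : Measure ℝ) [IsProbabilityMeasure μ] (x : ℝ) :
    tail μ x = 1 - μ.real (Iic x) := by
  rw [← probReal_compl_eq_one_sub measurableSet_Iic, compl_Iic]
  rfl

lemma antitone_tail (μ : Measure ℝ) [IsFiniteMeasure μ] : Antitone (tail μ) :=
  fun _ _ h => ENNReal.toReal_mono (measure_ne_top _ _) (measure_mono (Ioi_subset_Ioi h))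

lemma tail_nonneg (μ : Measure ℝ) (x : ℝ) : 0 ≤ tail μ x := ENNReal.toReal_nonneg

lemma tail_le_one (μ : Measure ℝ) [IsProbabilityMeasure μ] (x : ℝ) : tail μ x ≤ 1 :=
  measureReal_le_one

lemma tendsto_tail_atTop (μ : Measure ℝ) [IsProbabilityMeasure μ] :
    Tendsto (tail μ) atTop (𝓝 0) := by
  have h := (tendsto_const_nhds (x := (1 : ℝ))).sub (ProbabilityTheory.tendsto_cdf_atTop μ)
  simp only [sub_self] at h
  refine h.congr fun x => ?_
  rw [tail_eq_one_sub, ProbabilityTheory.cdf_eq_real]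

lemma tail_add_tail_sub_mul_le_tail_mconv {μ ν : Measure ℝ} [IsProbabilityMeasure μ]
    [IsProbabilityMeasure ν] (hμ : μ (Iio 0) = 0) (hν : ν (Iio 0) = 0) (x : ℝ) :
    tail μ x + tail ν x - tail μ x * tail ν x ≤ tail (mconv μ ν) x := by
  have h : (mconv μ ν).real (Iic x) ≤ μ.real (Iic x) * ν.real (Iic x) := by
    rw [measureReal_def, measureReal_def, measureReal_def, ← ENNReal.toReal_mul]
    exact ENNReal.toReal_mono (by finiteness) (mconv_Iic_le hμ hν x)
  rw [tail_eq_one_sub, tail_eq_one_sub, tail_eq_one_sub]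
  nlinarith

lemma integral_mul_exp_mul (β s : ℝ) : ∫ t in 0..s, β * exp (β * t) = exp (β * s) - 1 := by
  have hderiv (t : ℝ) : HasDerivAt (fun t => exp (β * t)) (β * exp (β * t)) t := by
    simpa [mul_comm] using ((hasDerivAt_id t).const_mul β).exp
  rw [intervalIntegral.integral_eq_sub_of_hasDerivAt (fun t _ => hderiv t)
    ((by fun_prop : Continuous fun t => β * exp (β * t)).intervalIntegrable _ _), mul_zero,
    exp_zero]

noncomputable def expTailIntegral (μ : Measure ℝ) (β T : ℝ) : ℝ :=
  ∫ t in 0..T, β * exp (β * t) * tail μ t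

section expTailIntegral

variable (μ : Measure ℝ)

lemma intervalIntegrable_mul_exp_mul_tail [IsFiniteMeasure μ] (β a b : ℝ) :
    IntervalIntegrable (fun t => β * exp (β * t) * tail μ t) volume a b :=
  (antitone_tail μ).intervalIntegrable.continuousOn_mul (by fun_prop)

lemma continuous_expTailIntegral [IsFiniteMeasure μ] (β : ℝ) :
    Continuous (expTailIntegral μ β) :=
  intervalIntegral.continuous_primitive (intervalIntegrable_mul_exp_mul_tail μ β) 0

lemma expTailIntegral_nonneg {β T : ℝ} (hβ : 0 ≤ β) (hT : 0 ≤ T) : 0 ≤ expTailIntegral μ β T :=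
  intervalIntegral.integral_nonneg hT fun t _ => by have := tail_nonneg μ t; positivity

lemma expTailIntegral_le [IsProbabilityMeasure μ] {β T : ℝ} (hβ : 0 ≤ β) (hT : 0 ≤ T) :
    expTailIntegral μ β T ≤ exp (β * T) - 1 := by
  rw [← integral_mul_exp_mul]
  refine intervalIntegral.integral_mono_on hT (intervalIntegrable_mul_exp_mul_tail μ β 0 T)
    ((by fun_prop : Continuous fun t => β * exp (β * t)).intervalIntegrable _ _) fun t _ => ?_
  have := tail_le_one μ t
  have : 0 ≤ β * exp (β * t) := by positivity
  nlinarith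

lemma lintegral_exp_min_eq [IsProbabilityMeasure μ] (hμ : μ (Iio 0) = 0) {β T : ℝ} (hβ : 0 ≤ β)
    (hT : 0 ≤ T) :
    ∫⁻ y, ENNReal.ofReal (exp (β * min y T)) ∂μ = ENNReal.ofReal (1 + expTailIntegral μ β T) := by
  have hmin : ∀ᵐ y ∂μ, 0 ≤ min y T :=
    (ae_nonneg_of_measure_Iio_eq_zero hμ).mono fun y hy => le_min hy hT
  have hint : IntegrableOn (fun t => β * exp (β * t) * tail μ t) (Ioo 0 T) :=
    (intervalIntegrable_iff_integrableOn_Ioo_of_le hT).mp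
      (intervalIntegrable_mul_exp_mul_tail μ β 0 T)
  calc ∫⁻ y, ENNReal.ofReal (exp (β * min y T)) ∂μ
      = ∫⁻ y, 1 + ENNReal.ofReal (∫ t in 0..min y T, β * exp (β * t)) ∂μ := by
        refine lintegral_congr_ae (hmin.mono fun y hy => ?_)
        dsimp only
        rw [integral_mul_exp_mul, ← ENNReal.ofReal_one, ← ENNReal.ofReal_add zero_le_one
          (sub_nonneg.mpr (one_le_exp (mul_nonneg hβ hy))), add_sub_cancel]
    _ = 1 + ∫⁻ t in Ioi 0, μ {y | t < min y T} * ENNReal.ofReal (β * exp (β * t)) := by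
        rw [lintegral_add_left measurable_const, lintegral_const, measure_univ, one_mul,
          lintegral_comp_eq_lintegral_meas_lt_mul μ hmin (by fun_prop)
            (fun _ _ => (by fun_prop : Continuous fun t => β * exp (β * t)).intervalIntegrable _ _)
            (ae_of_all _ fun t => by positivity)]
    _ = 1 + ∫⁻ t in Ioo 0 T, ENNReal.ofReal (β * exp (β * t) * tail μ t) := by
        have hset (t : ℝ) : μ {y | t < min y T} * ENNReal.ofReal (β * exp (β * t)) =
            (Iio T).indicator (fun t => ENNReal.ofReal (β * exp (β * t) * tail μ t)) t := by
          by_cases ht : t < T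
          · rw [indicator_of_mem (mem_Iio.mpr ht), tail,
              ENNReal.ofReal_mul (by positivity : 0 ≤ β * exp (β * t)),
              ENNReal.ofReal_toReal (measure_ne_top _ _), mul_comm]
            simp only [lt_min_iff, ht, and_true]
            rfl
          · simp [ht]
        rw [lintegral_congr hset, lintegral_indicator measurableSet_Iio,
          Measure.restrict_restrict measurableSet_Iio, Iio_inter_Ioi]
    _ = ENNReal.ofReal (1 + expTailIntegral μ β T) := by
        rw [← ofReal_integral_eq_lintegral_ofReal hint
          (ae_of_all _ fun t => by have := tail_nonneg μ t; positivity),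
          ← integral_Ioc_eq_integral_Ioo, ← intervalIntegral.integral_of_le hT,
          ENNReal.ofReal_add zero_le_one (expTailIntegral_nonneg μ hβ hT), ENNReal.ofReal_one]
        rfl

end expTailIntegral

lemma min_add_le_min_add_min {a b T : ℝ} (ha : 0 ≤ a) (hb : 0 ≤ b) (hT : 0 ≤ T) :
    min (a + b) T ≤ min a T + min b T := by
  simp only [min_def]
  split_ifs <;> linarith

lemma lintegral_exp_min_mconv_le {μ ν : Measure ℝ} [SFinite μ] [SFinite ν] (hμ : μ (Iio 0) = 0)
    (hν : ν (Iio 0) = 0) {β T : ℝ} (hβ : 0 ≤ β) (hT : 0 ≤ T) :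
    ∫⁻ y, ENNReal.ofReal (exp (β * min y T)) ∂(mconv μ ν) ≤
      (∫⁻ y, ENNReal.ofReal (exp (β * min y T)) ∂μ) *
        ∫⁻ y, ENNReal.ofReal (exp (β * min y T)) ∂ν := by
  rw [mconv, lintegral_map (by fun_prop) (by fun_prop),
    ← lintegral_prod_mul (by fun_prop) (by fun_prop)]
  refine lintegral_mono_ae ?_
  filter_upwards [ae_prod_nonneg hμ hν] with p hp
  rw [← ENNReal.ofReal_mul (exp_pos _).le, ← exp_add, ← mul_add]
  gcongr
  exact min_add_le_min_add_min hp.1 hp.2 hT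

lemma one_add_expTailIntegral_mconv_le {μ ν : Measure ℝ} [IsProbabilityMeasure μ]
    [IsProbabilityMeasure ν] (hμ : μ (Iio 0) = 0) (hν : ν (Iio 0) = 0) {β T : ℝ} (hβ : 0 ≤ β)
    (hT : 0 ≤ T) :
    1 + expTailIntegral (mconv μ ν) β T ≤
      (1 + expTailIntegral μ β T) * (1 + expTailIntegral ν β T) := by
  have h := lintegral_exp_min_mconv_le hμ hν hβ hT
  rw [lintegral_exp_min_eq _ (mconv_Iio_eq_zero hμ hν) hβ hT, lintegral_exp_min_eq _ hμ hβ hT,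
    lintegral_exp_min_eq _ hν hβ hT, ← ENNReal.ofReal_mul (by
      linarith [expTailIntegral_nonneg μ hβ hT])] at h
  exact (ENNReal.ofReal_le_ofReal_iff (by
    nlinarith [expTailIntegral_nonneg μ hβ hT, expTailIntegral_nonneg ν hβ hT])).mp h

lemma tendsto_lintegral_exp_min (μ : Measure ℝ) {β : ℝ} (hβ : 0 ≤ β) :
    Tendsto (fun n : ℕ => ∫⁻ y, ENNReal.ofReal (exp (β * min y n)) ∂μ) atTop
      (𝓝 (∫⁻ y, ENNReal.ofReal (exp (β * y)) ∂μ)) := by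
  refine lintegral_tendsto_of_tendsto_of_monotone (fun n => by fun_prop)
    (ae_of_all _ fun y m n hmn => ?_) (ae_of_all _ fun y => ?_)
  · dsimp only
    gcongr
  · refine tendsto_const_nhds.congr' ?_
    filter_upwards [tendsto_natCast_atTop_atTop.eventually_ge_atTop y] with n hn
    rw [min_eq_left hn]

lemma exists_lt_expTailIntegral (μ : Measure ℝ) [IsProbabilityMeasure μ] (hμ : μ (Iio 0) = 0)
    {β : ℝ} (hβ : 0 ≤ β) (hheavy : ∫⁻ y, ENNReal.ofReal (exp (β * y)) ∂μ = ⊤) (c M : ℝ) :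
    ∃ T ≥ M, c < expTailIntegral μ β T := by
  have h := tendsto_lintegral_exp_min μ hβ
  rw [hheavy] at h
  obtain ⟨n, hn, hMn⟩ := ((h.eventually (lt_mem_nhds (ENNReal.ofReal_lt_top (r := 1 + c)))).and
    (tendsto_natCast_atTop_atTop.eventually_ge_atTop M)).exists
  rw [lintegral_exp_min_eq μ hμ hβ n.cast_nonneg, ENNReal.ofReal_lt_ofReal_iff'] at hn
  exact ⟨n, hMn, by linarith [hn.1]⟩

lemma frequently_tail_mconv_le (F : Measure ℝ) [IsProbabilityMeasure F] (hsupp : F (Iio 0) = 0)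
    (hheavy : ∀ β : ℝ, 0 < β → ∫⁻ y, ENNReal.ofReal (exp (β * y)) ∂F = ⊤) :
    ∃ᶠ x in atTop, tail (mconv F F) x ≤ 16 * tail F x := by
  rw [frequently_atTop]
  intro M₀
  by_contra! hbig
  set M := max M₀ 1
  set β := M⁻¹
  have hM : 0 < M := lt_max_of_lt_right one_pos
  have hβ : 0 < β := inv_pos.mpr hM
  have hφM : expTailIntegral F β M ≤ 2 := by
    have h := expTailIntegral_le F hβ.le hM.le
    rw [inv_mul_cancel₀ hM.ne'] at h
    linarith [exp_one_lt_d9]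
  obtain ⟨T₁, hMT₁, hT₁⟩ := exists_lt_expTailIntegral F hsupp hβ.le (hheavy β hβ) 3 M
  obtain ⟨T, ⟨hMT, -⟩, hφT⟩ := intermediate_value_Icc hMT₁
    (continuous_expTailIntegral F β).continuousOn ⟨by linarith, hT₁.le⟩
  have hsplit (μ : Measure ℝ) [IsFiniteMeasure μ] : expTailIntegral μ β T =
      expTailIntegral μ β M + ∫ t in M..T, β * exp (β * t) * tail μ t :=
    (intervalIntegral.integral_add_adjacent_intervals
      (intervalIntegrable_mul_exp_mul_tail μ β 0 M)
      (intervalIntegrable_mul_exp_mul_tail μ β M T)).symm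
  have hcompare : 16 * ∫ t in M..T, β * exp (β * t) * tail F t ≤
      ∫ t in M..T, β * exp (β * t) * tail (mconv F F) t := by
    rw [← intervalIntegral.integral_const_mul]
    refine intervalIntegral.integral_mono_on hMT
      ((intervalIntegrable_mul_exp_mul_tail F β M T).const_mul 16)
      (intervalIntegrable_mul_exp_mul_tail _ β M T) fun t ht => ?_
    have := (hbig t (le_trans (le_max_left _ _) ht.1)).le
    have : 0 ≤ β * exp (β * t) := by positivity
    nlinarith
  have hsub := one_add_expTailIntegral_mconv_le hsupp hsupp hβ.le (hM.le.trans hMT)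
  rw [hsplit F] at hφT
  rw [hsplit F, hφT, hsplit (mconv F F)] at hsub
  linarith [expTailIntegral_nonneg (mconv F F) hβ.le hM.le]

/-- For any heavy-tailed distribution on the positive half-line with everywhere positive
tail, liminf of tail(F*F)(x)/tail(F)(x) is at least 2. -/
theorem stmt13 (F : Measure ℝ) [IsProbabilityMeasure F] (hsupp : F (Set.Iio 0) = 0)
    (hpos : ∀ x, 0 < tail F x)
    (hheavy : ∀ β : ℝ, 0 < β → ∫⁻ y, ENNReal.ofReal (Real.exp (β * y)) ∂F = ⊤) :
    2 ≤ atTop.liminf (fun x => tail (mconv F F) x / tail F x) := by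
  have hlower (x : ℝ) : 2 - tail F x ≤ tail (mconv F F) x / tail F x := by
    rw [le_div_iff₀ (hpos x)]
    nlinarith [tail_add_tail_sub_mul_le_tail_mconv hsupp hsupp x]
  have hcobdd : IsCoboundedUnder (· ≥ ·) atTop fun x => tail (mconv F F) x / tail F x :=
    IsCoboundedUnder.of_frequently_le <| (frequently_tail_mconv_le F hsupp hheavy).mono
      fun x hx => (div_le_iff₀ (hpos x)).mpr hx
  have hlim : Tendsto (fun x => 2 - tail F x) atTop (𝓝 2) := by
    simpa using tendsto_const_nhds.sub (tendsto_tail_atTop F)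
  calc 2 = atTop.liminf fun x => 2 - tail F x := hlim.liminf_eq.symm
    _ ≤ _ := liminf_le_liminf (.of_forall hlower) hlim.isBoundedUnder_ge hcobdd
end
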